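/- arXiv:2303.05633 — 4 statements merged into one kernel-verified Lean document; each statement's English description precedes it below -/
import Mathlib

section
/- If T is an ω₁-tree (a tree of height ω₁ with countable levels) that has an Aronszajn subtree (an uncountable subset which, with the induced order, has countable levels and no uncountable chain), then T has a downwards closed Aronszajn subtree. -/
noncomputable section

open Cardinal

/-- The first uncountable ordinal. -/
def omegaOne : Ordinal := (Cardinal.aleph 1).ord

/-- A tree of height `ω₁`: a partial order in which the predecessors of every element form
a well-order, recorded by an ordinal-valued height function, with elements at every
countable height. -/
structure Tree1 where
  α : Type
  le : α → α → Prop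
  le_refl : ∀ x, le x x
  le_antisymm : ∀ x y, le x y → le y x → x = y
  le_trans : ∀ x y z, le x y → le y z → le x z
  ht : α → Ordinal
  ht_lt_omegaOne : ∀ x, ht x < omegaOne
  ht_strict : ∀ x y, le x y → x ≠ y → ht x < ht y
  pred_linear : ∀ x y z, le y x → le z x → (le y z ∨ le z y)
  pred_exists : ∀ x β, β < ht x → ∃ y, le y x ∧ ht y = β
  height_surj : ∀ β, β < omegaOne → ∃ x, ht x = β

namespace Tree1

variable (T : Tree1)

/-- Strict tree order. -/
def lt (x y : T.α) : Prop := T.le x y ∧ x ≠ y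

def Incomp (x y : T.α) : Prop := ¬ T.le x y ∧ ¬ T.le y x

/-- A chain: a set of pairwise comparable elements. -/
def Chain (C : Set T.α) : Prop := ∀ x ∈ C, ∀ y ∈ C, T.le x y ∨ T.le y x

/-- An antichain: a set of pairwise incomparable elements. -/
def Antichain (A : Set T.α) : Prop := ∀ x ∈ A, ∀ y ∈ A, x ≠ y → T.Incomp x y

/-- Level `β` of the tree. -/
def Level (β : Ordinal) : Set T.α := {x | T.ht x = β}

/-- An `ω₁`-tree has all levels countable. -/
def CountableLevels : Prop := ∀ β, (T.Level β).Countable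

/-- Suslin: no uncountable chains and no uncountable antichains. -/
def Suslin : Prop :=
  (∀ C : Set T.α, T.Chain C → C.Countable) ∧
  (∀ A : Set T.α, T.Antichain A → A.Countable)

def DownwardsClosed (W : Set T.α) : Prop := ∀ x y, T.le x y → y ∈ W → x ∈ W

/-- Normality: root, ≥ 2 immediate successors, unique limit nodes, successors at all
countable heights. -/
def Normal : Prop :=
  (∃ r, ∀ x, T.le r x) ∧
  (∀ x, ∃ y z : T.α, T.lt x y ∧ T.lt x z ∧ y ≠ z ∧
    T.ht y = T.ht x + 1 ∧ T.ht z = T.ht x + 1) ∧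
  (∀ x y, T.ht x = T.ht y → Order.IsSuccLimit (T.ht x) → (∀ z, T.lt z x ↔ T.lt z y) → x = y) ∧
  (∀ x β, T.ht x ≤ β → β < omegaOne → ∃ y, T.le x y ∧ T.ht y = β)

theorem lt_wf : WellFounded T.lt :=
  Subrelation.wf (fun {x y} h => T.ht_strict x y h.1 h.2) (InvImage.wf T.ht wellFounded_lt)

/-- The height of an element of a subtree `U ⊆ T` computed in the induced order. -/
def subHt (U : Set T.α) (x : U) : Ordinal :=
  @IsWellFounded.rank U (InvImage T.lt Subtype.val) ⟨InvImage.wf Subtype.val T.lt_wf⟩ x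

/-- Levels of the subtree `U` (in the induced order) are countable. -/
def SubLevelsCountable (U : Set T.α) : Prop :=
  ∀ β, {x : U | T.subHt U x = β}.Countable

/-- An Aronszajn subtree: an uncountable subset which, with the induced order, has countable
levels and no uncountable chain. -/
def AronszajnSubtree (U : Set T.α) : Prop :=
  ¬ U.Countable ∧ T.SubLevelsCountable U ∧ ∀ C ⊆ U, T.Chain C → C.Countable

/-- The downward closure of a set. -/
def DownwardClosure (U : Set T.α) : Set T.α := {x | ∃ y ∈ U, T.le x y}

/-- A cofinal branch: a downwards closed chain meeting every level. -/
def CofinalBranch (b : Set T.α) : Prop :=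
  T.DownwardsClosed b ∧ T.Chain b ∧
    ∀ β, β < omegaOne → ∃ x ∈ b, T.ht x = β

end Tree1

/-! Let `U` be an Aronszajn subtree and `W` its downward closure. Since `W` is downwards closed,
heights in `W` are heights in `T`, so `W` inherits countable levels from `T`. If `C ⊆ W` were an
uncountable chain, its downward closure `b` would be an uncountable chain, and `b ∩ U`, a chain
of `U`, would be countable, hence of heights bounded by some `γ < ω₁`. Every `x ∈ b` lies below
an element `u ∈ U` that is minimal above `x`; all `U`-predecessors of such a `u` lie in `b ∩ U`,
so `u` has height at most `γ + 1` in `U`. There are countably many such `u`, each with countably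
many predecessors, so `b` would be countable. -/

universe u

section OmegaOne

theorem countable_Iio_iff_lt_omegaOne {o : Ordinal.{u}} :
    (Set.Iio o).Countable ↔ o < omegaOne := by
  rw [← Cardinal.le_aleph0_iff_set_countable, Cardinal.mk_Iio_ordinal, Cardinal.lift_le_aleph0,
    ← Cardinal.lt_aleph_one_iff, omegaOne, Cardinal.lt_ord]

theorem countable_Iic_of_lt_omegaOne {o : Ordinal.{u}} (h : o < omegaOne) :
    (Set.Iic o).Countable := by
  rw [← Set.Iio_insert]
  exact (countable_Iio_iff_lt_omegaOne.2 h).insert o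

theorem succ_lt_omegaOne {o : Ordinal.{u}} (h : o < omegaOne) : Order.succ o < omegaOne :=
  (Cardinal.isSuccLimit_ord (Cardinal.aleph0_le_aleph 1)).succ_lt h

open Ordinal in
theorem exists_lt_omegaOne_forall_le {ι : Type*} [Countable ι] {f : ι → Ordinal.{u}}
    (hf : ∀ i, f i < omegaOne) : ∃ γ < omegaOne, ∀ i, f i ≤ γ := by
  have hω : omegaOne.{u} = ω₁ := Cardinal.ord_aleph 1
  refine ⟨⨆ i, f i, ?_, Ordinal.le_iSup f⟩
  rw [hω] at hf ⊢
  exact Ordinal.iSup_lt_omega_one hf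

end OmegaOne

namespace Tree1

variable {T : Tree1}

theorem ht_le_ht {x y : T.α} (h : T.le x y) : T.ht x ≤ T.ht y := by
  rcases eq_or_ne x y with rfl | hne
  · exact le_rfl
  · exact (T.ht_strict x y h hne).le

theorem le_of_comparable_of_ht_le {x y : T.α} (h : T.le x y ∨ T.le y x)
    (hht : T.ht x ≤ T.ht y) : T.le x y := by
  rcases h with h | h
  · exact h
  rcases eq_or_ne y x with rfl | hne
  · exact h
  · exact absurd hht (T.ht_strict y x h hne).not_ge

theorem countable_setOf_le (x : T.α) : {y | T.le y x}.Countable := by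
  refine Set.MapsTo.countable_of_injOn (f := T.ht) (fun y hy => ht_le_ht hy) ?_
    (countable_Iic_of_lt_omegaOne (T.ht_lt_omegaOne x))
  intro y hy z hz hyz
  exact T.le_antisymm y z (le_of_comparable_of_ht_le (T.pred_linear x y z hy hz) hyz.le)
    (le_of_comparable_of_ht_le (T.pred_linear x z y hz hy) hyz.ge)

theorem subset_downwardClosure (U : Set T.α) : U ⊆ T.DownwardClosure U :=
  fun u hu => ⟨u, hu, T.le_refl u⟩

theorem downwardsClosed_downwardClosure (U : Set T.α) :
    T.DownwardsClosed (T.DownwardClosure U) := by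
  rintro x y hxy ⟨u, hu, hyu⟩
  exact ⟨u, hu, T.le_trans _ _ _ hxy hyu⟩

theorem downwardClosure_subset {U W : Set T.α} (hW : T.DownwardsClosed W) (hUW : U ⊆ W) :
    T.DownwardClosure U ⊆ W := by
  rintro x ⟨u, hu, hxu⟩
  exact hW x u hxu (hUW hu)

theorem Chain.downwardClosure {C : Set T.α} (hC : T.Chain C) :
    T.Chain (T.DownwardClosure C) := by
  rintro x ⟨c, hc, hxc⟩ y ⟨d, hd, hyd⟩
  rcases hC c hc d hd with hcd | hdc
  · exact T.pred_linear d x y (T.le_trans _ _ _ hxc hcd) hyd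
  · exact T.pred_linear c x y hxc (T.le_trans _ _ _ hyd hdc)

section SubHt

variable {U : Set T.α}

theorem subHt_eq_iSup (x : U) :
    T.subHt U x = ⨆ y : {y : U // T.lt y x}, Order.succ (T.subHt U y) :=
  @IsWellFounded.rank_eq U (InvImage T.lt Subtype.val) ⟨InvImage.wf Subtype.val T.lt_wf⟩ x

theorem subHt_lt_subHt {x y : U} (h : T.lt x y) : T.subHt U x < T.subHt U y :=
  IsWellFounded.rank_lt_of_rel (hwf := ⟨InvImage.wf Subtype.val T.lt_wf⟩) h

theorem subHt_le_succ {x : U} {γ : Ordinal} (h : ∀ y : U, T.lt y x → T.subHt U y ≤ γ) :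
    T.subHt U x ≤ Order.succ γ := by
  rw [subHt_eq_iSup]
  exact Ordinal.iSup_le fun y => Order.succ_le_succ (h y y.2)

theorem subHt_le_ht (x : U) : T.subHt U x ≤ T.ht x := by
  induction x using (InvImage.wf Subtype.val T.lt_wf).induction with
  | _ x ih =>
    rw [subHt_eq_iSup]
    exact Ordinal.iSup_le fun y =>
      Order.succ_le_of_lt ((ih y y.2).trans_lt (T.ht_strict _ _ y.2.1 y.2.2))

theorem ht_le_subHt (hU : T.DownwardsClosed U) (x : U) : T.ht x ≤ T.subHt U x := by
  induction x using (InvImage.wf Subtype.val T.lt_wf).induction with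
  | _ x ih =>
    refine le_of_forall_lt fun β hβ => ?_
    obtain ⟨y, hyx, rfl⟩ := T.pred_exists x β hβ
    have hne : y ≠ x := by rintro rfl; exact hβ.false
    let y' : U := ⟨y, hU y x hyx x.2⟩
    exact (ih y' ⟨hyx, hne⟩).trans_lt (subHt_lt_subHt ⟨hyx, hne⟩)

theorem subHt_eq_ht (hU : T.DownwardsClosed U) (x : U) : T.subHt U x = T.ht x :=
  (subHt_le_ht x).antisymm (ht_le_subHt hU x)

theorem subLevelsCountable_of_downwardsClosed (hT : T.CountableLevels)
    (hU : T.DownwardsClosed U) : T.SubLevelsCountable U := by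
  intro β
  exact ((hT β).preimage Subtype.val_injective).mono fun x hx => (subHt_eq_ht hU x).symm.trans hx

end SubHt

theorem subHt_le_succ_of_minimal {b U : Set T.α} (hb : T.DownwardsClosed b) {γ : Ordinal}
    (hγ : ∀ y ∈ b ∩ U, T.ht y ≤ γ) {x : T.α} (hx : x ∈ b) {u : U} (hxu : T.le x u)
    (hmin : ∀ w ∈ U, T.le x w → ¬ T.lt w u) : T.subHt U u ≤ Order.succ γ := by
  refine subHt_le_succ fun w hwu => (subHt_le_ht w).trans (hγ w ⟨?_, w.2⟩)
  rcases T.pred_linear u w x hwu.1 hxu with hwx | hxw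
  · exact hb w x hwx hx
  · exact absurd hwu (hmin w w.2 hxw)

theorem countable_of_subset_downwardClosure {b U : Set T.α} (hb : T.DownwardsClosed b)
    (hU : T.SubLevelsCountable U) (hbU : b ⊆ T.DownwardClosure U) (hbU' : (b ∩ U).Countable) :
    b.Countable := by
  have : Countable ↥(b ∩ U) := hbU'.to_subtype
  obtain ⟨γ, hγ, hγ_ge⟩ := exists_lt_omegaOne_forall_le fun y : ↥(b ∩ U) => T.ht_lt_omegaOne y
  let M : Set U := {u | ∃ x ∈ b, T.le x u ∧ ∀ w ∈ U, T.le x w → ¬ T.lt w u}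
  have hM : M.Countable := by
    refine ((countable_Iic_of_lt_omegaOne (succ_lt_omegaOne hγ)).biUnion fun δ _ => hU δ).mono ?_
    rintro u ⟨x, hx, hxu, hmin⟩
    exact Set.mem_biUnion
      (subHt_le_succ_of_minimal hb (fun y hy => hγ_ge ⟨y, hy⟩) hx hxu hmin) rfl
  have hcover : b ⊆ ⋃ u ∈ M, {y | T.le y u.1} := by
    intro x hx
    obtain ⟨u, hu, hxu⟩ := hbU hx
    obtain ⟨m, ⟨hmU, hxm⟩, hmin⟩ := T.lt_wf.has_min {w | w ∈ U ∧ T.le x w} ⟨u, hu, hxu⟩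
    have hmM : (⟨m, hmU⟩ : U) ∈ M := ⟨x, hx, hxm, fun w hw hxw => hmin w ⟨hw, hxw⟩⟩
    exact Set.mem_biUnion hmM hxm
  exact (hM.biUnion fun u _ => countable_setOf_le u.1).mono hcover

end Tree1

/-- if an `ω₁`-tree has an Aronszajn subtree, then it has a downwards closed
Aronszajn subtree. -/
theorem rigidKurepa_stmt0 (T : Tree1) (hT : T.CountableLevels)
    (h : ∃ U : Set T.α, T.AronszajnSubtree U) :
    ∃ W : Set T.α, T.DownwardsClosed W ∧ T.AronszajnSubtree W := by
  obtain ⟨U, hU_unc, hU_lev, hU_chain⟩ := h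
  have hW := T.downwardsClosed_downwardClosure U
  refine ⟨T.DownwardClosure U, hW, fun hc => hU_unc (hc.mono (T.subset_downwardClosure U)),
    Tree1.subLevelsCountable_of_downwardsClosed hT hW, fun C hCW hC => ?_⟩
  by_contra hC_unc
  let b := T.DownwardClosure C
  have hb_chain : T.Chain b := hC.downwardClosure
  have hbU : b ⊆ T.DownwardClosure U := Tree1.downwardClosure_subset hW hCW
  have hb_unc : ¬ b.Countable := fun hc => hC_unc (hc.mono (T.subset_downwardClosure C))
  exact hb_unc (Tree1.countable_of_subset_downwardClosure (T.downwardsClosed_downwardClosure C)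
    hU_lev hbU (hU_chain _ Set.inter_subset_right fun x hx y hy => hb_chain x hx.1 y hy.1))
end
end

section
/- Let S be a Suslin tree and D ⊆ S a dense open subset in the reversed (forcing) order. Then there exists γ < ω₁ such that every element of S of height γ belongs to D. -/
noncomputable section

open Cardinal

/-! Take a maximal antichain `A` inside `D`. As `S` is Suslin, `A` is countable, so the heights
of its elements are bounded by some `γ < ω₁`. A node `x` of height `γ` lies below some `y ∈ D`,
which by maximality is comparable with some `a ∈ A`; since `a` lies strictly below level `γ`,
this forces `a ≤ x`, and `x ∈ D` because `D` is open. -/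

theorem omegaOne_isSuccLimit : Order.IsSuccLimit omegaOne :=
  Cardinal.isSuccLimit_ord (Cardinal.aleph0_le_aleph 1)

theorem exists_lt_omegaOne_forall_lt {ι : Type*} [Countable ι] {f : ι → Ordinal}
    (hf : ∀ i, f i < omegaOne) : ∃ γ < omegaOne, ∀ i, f i < γ := by
  have hω : omegaOne = Ordinal.omega 1 := Cardinal.ord_aleph 1
  have : Countable (Set.range fun i => f i + 1) := (Set.countable_range _).to_subtype
  refine ⟨⨆ i, f i + 1, ?_, fun i => ?_⟩
  · have hf' := fun i => omegaOne_isSuccLimit.add_one_lt (hf i)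
    rw [hω] at hf' ⊢
    exact Ordinal.iSup_lt_omega_one hf'
  · exact (lt_add_one (f i)).trans_le (le_ciSup Ordinal.bddAbove_of_small i)

namespace Tree1

variable {T : Tree1}

theorem Incomp.symm {x y : T.α} (h : T.Incomp x y) : T.Incomp y x := ⟨h.2, h.1⟩

theorem not_le_of_ht_lt {x y : T.α} (h : T.ht x < T.ht y) : ¬ T.le y x := by
  intro hyx
  by_cases hxy : y = x
  · exact (hxy ▸ h).false
  · exact (T.ht_strict y x hyx hxy).asymm h

theorem Antichain.insert {A : Set T.α} {y : T.α} (hA : T.Antichain A)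
    (hy : ∀ a ∈ A, T.Incomp y a) : T.Antichain (insert y A) := by
  rintro u (rfl | hu) v (rfl | hv) huv
  · exact absurd rfl huv
  · exact hy v hv
  · exact (hy u hu).symm
  · exact hA u hu v hv huv

variable (T) in
theorem exists_maximal_antichain_subset (D : Set T.α) :
    ∃ A, Maximal (fun B => B ⊆ D ∧ T.Antichain B) A := by
  refine zorn_subset _ fun c hc hchain => ⟨⋃₀ c, ⟨?_, ?_⟩, fun _ => Set.subset_sUnion_of_mem⟩
  · rintro x ⟨A, hAc, hxA⟩
    exact (hc hAc).1 hxA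
  · rintro x ⟨A, hAc, hxA⟩ y ⟨B, hBc, hyB⟩ hxy
    rcases hchain.total hAc hBc with h | h
    · exact (hc hBc).2 x (h hxA) y hyB hxy
    · exact (hc hAc).2 x hxA y (h hyB) hxy

theorem exists_comparable_of_maximal {D A : Set T.α}
    (hmax : Maximal (fun B => B ⊆ D ∧ T.Antichain B) A) {y : T.α} (hy : y ∈ D) :
    ∃ a ∈ A, T.le a y ∨ T.le y a := by
  by_contra! hincomp
  have hins : insert y A ⊆ A :=
    hmax.2 ⟨Set.insert_subset hy hmax.1.1, hmax.1.2.insert fun a ha => (hincomp a ha).symm⟩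
      (Set.subset_insert _ _)
  exact (hincomp y (hins (Set.mem_insert y A))).1 (T.le_refl y)

theorem le_of_ht_lt_of_comparable {a x y : T.α} (hax : T.ht a < T.ht x) (hxy : T.le x y)
    (hay : T.le a y ∨ T.le y a) : T.le a x := by
  rcases hay with hay | hya
  · exact (T.pred_linear y a x hay hxy).resolve_right (not_le_of_ht_lt hax)
  · exact absurd (T.le_trans x y a hxy hya) (not_le_of_ht_lt hax)

end Tree1

/-- if `S` is a Suslin tree and `D ⊆ S` is dense open in the reversed (forcing)
order, then some entire level of `S` is contained in `D`. -/
theorem rigidKurepa_stmt2 (S : Tree1) (hS : S.Suslin) (D : Set S.α)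
    (hdense : ∀ x : S.α, ∃ y ∈ D, S.le x y)
    (hopen : ∀ x ∈ D, ∀ y : S.α, S.le x y → y ∈ D) :
    ∃ γ, γ < omegaOne ∧ ∀ x : S.α, S.ht x = γ → x ∈ D := by
  obtain ⟨A, hmax⟩ := S.exists_maximal_antichain_subset D
  have : Countable A := (hS.2 A hmax.1.2).to_subtype
  obtain ⟨γ, hγ, hAγ⟩ :=
    exists_lt_omegaOne_forall_lt fun a : A => S.ht_lt_omegaOne a
  refine ⟨γ, hγ, fun x hx => ?_⟩
  obtain ⟨y, hyD, hxy⟩ := hdense x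
  obtain ⟨a, haA, hay⟩ := Tree1.exists_comparable_of_maximal hmax hyD
  exact hopen a (hmax.1.1 haA) x
    (Tree1.le_of_ht_lt_of_comparable (hx ▸ hAγ ⟨a, haA⟩) hxy hay)
end
end

section
/- If a tree R of height ω₁ is free (n-free for all 0 < n < ω), then R is rigid: it has no automorphism other than the identity. More precisely, if f : R → R is an automorphism and f(x) ≠ x for some x, then choosing y = f(x), the derived tree R_x ⊗ R_y would contain an uncountable chain {(z, f(z)) : z >_R x}, contradicting that R_x ⊗ R_y is Suslin. -/
noncomputable section

open Cardinal

namespace Tree1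

variable (R : Tree1)

/-- The derived tree `R_{x₀} ⊗ ⋯ ⊗ R_{x_{n-1}}`: tuples of elements above the `x i`
having a common height, ordered componentwise. -/
def Derived {n : ℕ} (x : Fin n → R.α) : Type :=
  {a : Fin n → R.α // (∀ i, R.le (x i) (a i)) ∧ ∀ i j, R.ht (a i) = R.ht (a j)}

/-- The componentwise order on a derived tree. -/
def dle {n : ℕ} {x : Fin n → R.α} (a b : R.Derived x) : Prop :=
  ∀ i, R.le (a.1 i) (b.1 i)

/-- A derived tree is Suslin: all of its chains and antichains are countable. -/
def DerivedSuslin {n : ℕ} (x : Fin n → R.α) : Prop :=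
  (∀ C : Set (R.Derived x), (∀ c ∈ C, ∀ d ∈ C, R.dle c d ∨ R.dle d c) → C.Countable) ∧
  (∀ A : Set (R.Derived x), (∀ c ∈ A, ∀ d ∈ A, c ≠ d → ¬ R.dle c d ∧ ¬ R.dle d c) →
    A.Countable)

/-- `R` is `n`-free: all of its `n`-derived trees are Suslin. -/
def NFree (n : ℕ) : Prop :=
  ∀ x : Fin n → R.α, Function.Injective x → (∀ i j, R.ht (x i) = R.ht (x j)) →
    R.DerivedSuslin x

end Tree1

/-! An automorphism `f` preserves heights. If `f x ≠ x`, choose above `x`, at every countable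
height, a node `z` with distinct immediate successors `a` and `b`. The pairs `(a, f b)` lie in
`R_x ⊗ R_{f x}`, and any two comparable ones coincide, since otherwise both successors of the
lower node would lie below the higher one at a common height. They therefore form an
uncountable antichain, so `R_x ⊗ R_{f x}` is not Suslin and `R` is not 2-free. -/

theorem countable_Iio_of_lt_omegaOne {γ : Ordinal} (hγ : γ < omegaOne) :
    (Set.Iio γ).Countable := by
  rw [← Cardinal.le_aleph0_iff_set_countable, Cardinal.mk_Iio_ordinal, Cardinal.lift_le_aleph0,
    ← Cardinal.lt_aleph_one_iff]
  exact Cardinal.lt_ord.mp hγ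

theorem not_countable_Iio_omegaOne : ¬ (Set.Iio omegaOne).Countable := by
  rw [← Cardinal.le_aleph0_iff_set_countable, Cardinal.mk_Iio_ordinal, omegaOne,
    Cardinal.card_ord]
  simp

theorem not_countable_Ico_omegaOne {γ : Ordinal} (hγ : γ < omegaOne) :
    ¬ (Set.Ico γ omegaOne).Countable := fun h =>
  not_countable_Iio_omegaOne (((countable_Iio_of_lt_omegaOne hγ).union h).mono
    Set.Iio_subset_Iio_union_Ico)

namespace Tree1

variable {R : Tree1}

theorem ht_le_ht_of_le {a b : R.α} (h : R.le a b) : R.ht a ≤ R.ht b := by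
  rcases eq_or_ne a b with rfl | hne
  · exact le_rfl
  · exact (R.ht_strict a b h hne).le

theorem eq_of_le_of_ht_eq {a b : R.α} (h : R.le a b) (hh : R.ht a = R.ht b) : a = b := by
  by_contra hne
  exact (R.ht_strict a b h hne).ne hh

theorem le_of_le_of_le_of_ht_le {a w c : R.α} (hac : R.le a c) (hwc : R.le w c)
    (hh : R.ht a ≤ R.ht w) : R.le a w := by
  rcases R.pred_linear c a w hac hwc with haw | hwa
  · exact haw
  · rw [eq_of_le_of_ht_eq hwa (_root_.le_antisymm (ht_le_ht_of_le hwa) hh)]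
    exact R.le_refl a

theorem eq_of_le_of_le_of_ht_eq {a b w : R.α} (ha : R.le a w) (hb : R.le b w)
    (hh : R.ht a = R.ht b) : a = b :=
  eq_of_le_of_ht_eq (le_of_le_of_le_of_ht_le ha hb hh.le) hh

theorem ht_le_ht_apply {g : R.α → R.α} (hinj : Function.Injective g)
    (hg : ∀ a b, R.le a b → R.le (g a) (g b)) (x : R.α) : R.ht x ≤ R.ht (g x) := by
  induction x using R.lt_wf.induction with
  | _ z ih =>
    refine le_of_forall_lt fun γ hγ => ?_
    obtain ⟨w, hwz, rfl⟩ := R.pred_exists z γ hγ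
    have hne : w ≠ z := by rintro rfl; exact hγ.false
    calc R.ht w ≤ R.ht (g w) := ih w ⟨hwz, hne⟩
      _ < R.ht (g z) := R.ht_strict _ _ (hg w z hwz) (hinj.ne hne)

theorem ht_apply_eq {f : R.α → R.α} (hbij : Function.Bijective f)
    (hiso : ∀ a b, R.le a b ↔ R.le (f a) (f b)) (x : R.α) : R.ht (f x) = R.ht x := by
  let e := Equiv.ofBijective f hbij
  have hsymm : ∀ a b, R.le a b → R.le (e.symm a) (e.symm b) := fun a b h => by
    rwa [hiso, show f (e.symm a) = a from e.apply_symm_apply a,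
      show f (e.symm b) = b from e.apply_symm_apply b]
  refine _root_.le_antisymm ?_ (ht_le_ht_apply hbij.injective (fun a b => (hiso a b).1) x)
  simpa [e] using ht_le_ht_apply e.symm.injective hsymm (f x)

def IsSplit (z a b : R.α) : Prop :=
  R.le z a ∧ R.le z b ∧ a ≠ b ∧ R.ht a = R.ht z + 1 ∧ R.ht b = R.ht z + 1

theorem IsSplit.eq_of_le {z a b w c d : R.α} (hp : R.IsSplit z a b) (hq : R.IsSplit w c d)
    (hac : R.le a c) (hbd : R.le b d) : a = c ∧ b = d := by
  obtain ⟨-, -, hab, ha, hb⟩ := hp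
  obtain ⟨hwc, hwd, -, hc, hd⟩ := hq
  have hzw : R.ht z ≤ R.ht w := by
    have := ht_le_ht_of_le hac
    rwa [ha, hc, ← Order.succ_eq_add_one, ← Order.succ_eq_add_one, Order.succ_le_succ_iff]
      at this
  rcases hzw.lt_or_eq with hlt | heq
  · have hsucc : R.ht z + 1 ≤ R.ht w := Order.add_one_le_of_lt hlt
    have haw := le_of_le_of_le_of_ht_le hac hwc (ha ▸ hsucc)
    have hbw := le_of_le_of_le_of_ht_le hbd hwd (hb ▸ hsucc)
    exact absurd (eq_of_le_of_le_of_ht_eq haw hbw (ha.trans hb.symm)) hab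
  · exact ⟨eq_of_le_of_ht_eq hac (by rw [ha, hc, heq]),
      eq_of_le_of_ht_eq hbd (by rw [hb, hd, heq])⟩

def derivedPair {x y a b : R.α} (ha : R.le x a) (hb : R.le y b) (hab : R.ht a = R.ht b) :
    R.Derived ![x, y] :=
  ⟨![a, b], by simp [Fin.forall_fin_two, ha, hb, hab]⟩

theorem Normal.exists_not_countable_antichain_derived (hR : R.Normal) {g : R.α → R.α}
    (hg : ∀ a b, R.le a b ↔ R.le (g a) (g b)) (hgt : ∀ a, R.ht (g a) = R.ht a) (x : R.α) :
    ∃ A : Set (R.Derived ![x, g x]),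
      (∀ c ∈ A, ∀ d ∈ A, c ≠ d → ¬ R.dle c d ∧ ¬ R.dle d c) ∧ ¬ A.Countable := by
  let A : Set (R.Derived ![x, g x]) :=
    {p | ∃ z a b, R.le x z ∧ R.IsSplit z a b ∧ p.1 = ![a, g b]}
  have heq_of_dle : ∀ p ∈ A, ∀ q ∈ A, R.dle p q → p = q := by
    rintro p ⟨z, a, b, -, hp, hpv⟩ q ⟨w, c, d, -, hq, hqv⟩ hpq
    have hac : R.le a c := by simpa [hpv, hqv] using hpq 0
    have hbd : R.le b d := (hg b d).2 (by simpa [hpv, hqv] using hpq 1)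
    obtain ⟨rfl, rfl⟩ := hp.eq_of_le hq hac hbd
    exact Subtype.ext (hpv.trans hqv.symm)
  refine ⟨A, fun p hp q hq hne => ⟨fun h => hne (heq_of_dle p hp q hq h),
    fun h => hne (heq_of_dle q hq p hp h).symm⟩, fun hA => ?_⟩
  have hsub : Order.succ '' Set.Ico (R.ht x) omegaOne ⊆ (fun p => R.ht (p.1 0)) '' A := by
    rintro _ ⟨γ, ⟨hxγ, hγ⟩, rfl⟩
    obtain ⟨z, hxz, rfl⟩ := hR.2.2.2 x γ hxγ hγ
    obtain ⟨a, b, hza, hzb, hab, ha, hb⟩ := hR.2.1 z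
    refine ⟨derivedPair (R.le_trans _ _ _ hxz hza.1) ((hg x b).1 (R.le_trans _ _ _ hxz hzb.1))
      (by rw [hgt, ha, hb]), ⟨z, a, b, hxz, ⟨hza.1, hzb.1, hab, ha, hb⟩, rfl⟩, ?_⟩
    simp [derivedPair, ha, Order.succ_eq_add_one]
  exact not_countable_Ico_omegaOne (R.ht_lt_omegaOne x)
    (Set.countable_of_injective_of_countable_image Order.succ_injective.injOn
      ((hA.image _).mono hsub))

end Tree1

/-- a free normal tree of height `ω₁` is rigid: its only automorphism is the
identity. -/
theorem rigidKurepa_stmt13 (R : Tree1) (hR : R.Normal)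
    (hfree : ∀ n : ℕ, 0 < n → R.NFree n)
    (f : R.α → R.α) (hbij : Function.Bijective f)
    (hiso : ∀ x y, R.le x y ↔ R.le (f x) (f y)) :
    ∀ x, f x = x := by
  intro x
  by_contra hfx
  have hht := Tree1.ht_apply_eq hbij hiso
  obtain ⟨A, hanti, hA⟩ := hR.exists_not_countable_antichain_derived hiso hht x
  have hinj : Function.Injective ![x, f x] := by
    simp [Function.Injective, Fin.forall_fin_two, hfx, Ne.symm hfx]
  exact hA ((hfree 2 two_pos ![x, f x] hinj (by simp [Fin.forall_fin_two, hht])).2 A hanti)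
end
end

section
/- A 2-free normal tree R of height ω₁ is totally rigid: for all distinct x, y ∈ R, the subtrees R_x and R_y are not isomorphic. -/
noncomputable section

open Cardinal

/-! An order isomorphism `e : R_p ≃o R_q` shifts heights uniformly: `ht (e a) = ht q + d` whenever
`ht a = ht p + d`. Hence `e` preserves the height `δ` of any additively principal countable
`δ > ht p, ht q`; if `q ≰ p`, normality gives `u ≥ p` of height `δ` with `q ≰ u`, so `e u ≠ u`,
and `e` restricts to `R_u ≃o R_{e u}`.

For distinct `u, v` of equal height and `e : R_u ≃o R_v`, the graph `{(a, e a)}` is downward closed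
in the derived tree `R_u ⊗ R_v`, so the minimal nodes off the graph form an antichain, countable by
`2`-freeness, and their heights are bounded by some `σ < ω₁`. But by normality every node
`(a, e a)` of the graph has an immediate successor `(a', b')` with `b' ≠ e a'`, and that node is
minimal off the graph. -/

open Ordinal

theorem omegaOne_eq : omegaOne = ω₁ := ord_aleph 1

def OrderIso.restrictIci {α β : Type*} [Preorder α] [Preorder β] {p : α} {q : β}
    (e : Set.Ici p ≃o Set.Ici q) (u : Set.Ici p) : Set.Ici (u : α) ≃o Set.Ici (e u : β) where
  toFun a := ⟨e ⟨a, Set.mem_Ici.2 (u.2.out.trans a.2)⟩, e.monotone (show u ≤ ⟨a, _⟩ from a.2)⟩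
  invFun b := ⟨e.symm ⟨b, Set.mem_Ici.2 ((e u).2.out.trans b.2)⟩, by
    simpa using e.symm.monotone (show e u ≤ ⟨b, _⟩ from b.2)⟩
  left_inv a := Subtype.ext (by simp)
  right_inv b := Subtype.ext (by simp)
  map_rel_iff' {a b} := by
    change e _ ≤ e _ ↔ _
    rw [e.le_iff_le]
    rfl

theorem Ordinal.exists_isPrincipal_add_gt {a : Ordinal} (ha : a < ω₁) :
    ∃ δ, a < δ ∧ δ < ω₁ ∧ IsPrincipal (· + ·) δ := by
  refine ⟨ω ^ (a + 1), (Order.lt_add_one_iff.2 le_rfl).trans_le (right_le_opow _ one_lt_omega0),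
    ?_, isPrincipal_add_omega0_opow _⟩
  rw [← ord_aleph]
  exact isPrincipal_opow_ord (aleph0_le_aleph 1) (by rw [ord_aleph]; exact omega0_lt_omega_one)
    ((isSuccLimit_ord (aleph0_le_aleph 1)).add_one_lt (by rwa [ord_aleph]))

theorem Set.Countable.exists_lt_omega_one_forall_le {ι : Type*} {s : Set ι} (hs : s.Countable)
    {f : ι → Ordinal} (hf : ∀ i, f i < ω₁) : ∃ σ < ω₁, ∀ i ∈ s, f i ≤ σ := by
  have := hs.to_subtype
  exact ⟨⨆ i : s, f i, Ordinal.iSup_lt_omega_one fun i => hf i,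
    fun i hi => Ordinal.le_iSup (fun i : s => f i) ⟨i, hi⟩⟩

namespace Tree1

instance instPartialOrder (R : Tree1) : PartialOrder R.α where
  le := R.le
  le_refl := R.le_refl
  le_trans := R.le_trans
  le_antisymm := R.le_antisymm

variable {R : Tree1}

theorem ht_strictMono : StrictMono R.ht := fun x y h => R.ht_strict x y h.le h.ne

instance (R : Tree1) : WellFoundedLT R.α := ht_strictMono.wellFoundedLT

theorem le_of_le_of_ht_le {z w c : R.α} (hz : z ≤ c) (hw : w ≤ c) (h : R.ht z ≤ R.ht w) :
    z ≤ w := by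
  rcases R.pred_linear c z w hz hw with hzw | hwz
  · exact hzw
  · exact ((show w ≤ z from hwz).eq_of_not_lt fun hlt => (ht_strictMono hlt).not_ge h).ge

theorem eq_of_le_of_ht_eq_s14 {z w : R.α} (h : z ≤ w) (hht : R.ht z = R.ht w) : z = w :=
  h.eq_of_not_lt fun hlt => (ht_strictMono hlt).ne hht

theorem eq_of_le_of_le_of_ht_eq_s14 {z w c : R.α} (hz : z ≤ c) (hw : w ≤ c)
    (h : R.ht z = R.ht w) : z = w :=
  eq_of_le_of_ht_eq_s14 (le_of_le_of_ht_le hz hw h.le) h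

theorem le_of_lt_of_ht_eq_add_one {z a c : R.α} (hz : z < c) (ha : a ≤ c)
    (hc : R.ht c = R.ht a + 1) : z ≤ a :=
  le_of_le_of_ht_le hz.le ha (Order.lt_add_one_iff.1 (hc ▸ ht_strictMono hz))

theorem Normal.exists_ht_eq_add_one_ne (hR : R.Normal) (x c : R.α) :
    ∃ y, x ≤ y ∧ R.ht y = R.ht x + 1 ∧ y ≠ c := by
  obtain ⟨y, z, hy, hz, hyz, hty, htz⟩ := hR.2.1 x
  by_cases hyc : y = c
  · exact ⟨z, hz.1, htz, fun hzc => hyz (hyc.trans hzc.symm)⟩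
  · exact ⟨y, hy.1, hty, hyc⟩

theorem Normal.exists_ht_eq_not_le (hR : R.Normal) {p q : R.α} (hqp : ¬ q ≤ p) {δ : Ordinal}
    (hδ : R.ht p < δ) (hδω : δ < omegaOne) : ∃ u, p ≤ u ∧ R.ht u = δ ∧ ¬ q ≤ u := by
  obtain ⟨s, t, hs, ht, hst, hts, htt⟩ := hR.2.1 p
  have hps : p ≤ s := hs.1
  have hpt : p ≤ t := ht.1
  obtain ⟨us, hsus, hus⟩ := hR.2.2.2 s δ (hts ▸ Order.add_one_le_of_lt hδ) hδω
  obtain ⟨ut, htut, hut⟩ := hR.2.2.2 t δ (htt ▸ Order.add_one_le_of_lt hδ) hδω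
  by_contra! hq
  have hqus := hq us (hps.trans hsus) hus
  have hqut := hq ut (hpt.trans htut) hut
  have hpq : p < q := by
    refine lt_of_le_of_ne ?_ fun hpq => hqp hpq.ge
    exact (R.pred_linear us p q (hps.trans hsus) hqus).resolve_right hqp
  have hsq : s ≤ q := le_of_le_of_ht_le hsus hqus (hts ▸ Order.add_one_le_of_lt (ht_strictMono hpq))
  have htq : t ≤ q := le_of_le_of_ht_le htut hqut (htt ▸ Order.add_one_le_of_lt (ht_strictMono hpq))
  exact hst (eq_of_le_of_le_of_ht_eq_s14 hsq htq (hts.trans htt.symm))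

section OrderIso

variable {p q : R.α} (e : Set.Ici p ≃o Set.Ici q)

theorem ht_apply_le_of_ht_eq_add (a : Set.Ici p) :
    ∀ d, R.ht a = R.ht p + d → R.ht (e a : R.α) ≤ R.ht q + d := by
  induction a using WellFoundedLT.induction with
  | _ a IH =>
  intro d hd
  by_contra! hlt
  obtain ⟨z, hz, hzht⟩ := R.pred_exists (e a) (R.ht q + d) hlt
  have hqz : q ≤ z := le_of_le_of_ht_le (e a).2 hz (hzht ▸ le_self_add)
  obtain ⟨w, hw⟩ := e.surjective ⟨z, hqz⟩
  have hwz : R.ht (e w : R.α) = R.ht q + d := by rw [hw, hzht]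
  have hwa : w < a := by
    refine e.lt_iff_lt.1 (lt_of_le_of_ne (hw ▸ hz) fun h => hlt.ne ?_)
    rw [← h, hwz]
  have hpw : R.ht p ≤ R.ht w := ht_strictMono.monotone w.2
  have hw' := IH w hwa (R.ht w - R.ht p) (Ordinal.add_sub_cancel_of_le hpw).symm
  rw [hwz, add_le_add_iff_left, Ordinal.le_sub_of_le hpw, ← hd] at hw'
  exact (ht_strictMono hwa).not_ge hw'

theorem ht_apply_eq_add (a : Set.Ici p) (d : Ordinal) (hd : R.ht a = R.ht p + d) :
    R.ht (e a : R.α) = R.ht q + d := by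
  have hqa : R.ht q ≤ R.ht (e a : R.α) := ht_strictMono.monotone (e a).2
  set d' := R.ht (e a : R.α) - R.ht q
  have hd' : R.ht (e a : R.α) = R.ht q + d' := (Ordinal.add_sub_cancel_of_le hqa).symm
  have hle := ht_apply_le_of_ht_eq_add e a d hd
  have hge := ht_apply_le_of_ht_eq_add e.symm (e a) d' hd'
  rw [e.symm_apply_apply, hd, add_le_add_iff_left] at hge
  rw [hd', add_le_add_iff_left] at hle
  rw [hd', _root_.le_antisymm hle hge]

theorem ht_apply_eq_of_ht_eq (hpq : R.ht p = R.ht q) (a : Set.Ici p) :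
    R.ht (e a : R.α) = R.ht a := by
  have hpa : R.ht p ≤ R.ht a := ht_strictMono.monotone a.2
  rw [ht_apply_eq_add e a _ (Ordinal.add_sub_cancel_of_le hpa).symm, ← hpq,
    Ordinal.add_sub_cancel_of_le hpa]

end OrderIso

section Derived

variable {n : ℕ} {x : Fin n → R.α}

theorem lt_of_dle_of_ne {c d : R.Derived x} (hcd : R.dle c d) (hne : c ≠ d) (i : Fin n) :
    c.1 i < d.1 i := by
  refine lt_of_le_of_ne (hcd i) fun h => hne (Subtype.ext (funext fun j => ?_))
  exact eq_of_le_of_ht_eq_s14 (hcd j) (by rw [c.2.2 j i, h, d.2.2 i j])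

theorem dle_of_dle_of_ht_eq_add_one {c d f : R.Derived x} (hcf : R.dle c f) (hne : c ≠ f)
    (hdf : R.dle d f) (i : Fin n) (hi : R.ht (f.1 i) = R.ht (d.1 i) + 1) : R.dle c d := fun j =>
  le_of_lt_of_ht_eq_add_one (lt_of_dle_of_ne hcf hne j) (hdf j) (by rw [f.2.2 j i, hi, d.2.2 i j])

end Derived

def Derived.pair {u v a b : R.α} (ha : u ≤ a) (hb : v ≤ b) (hab : R.ht a = R.ht b) :
    R.Derived ![u, v] :=
  ⟨![a, b], Fin.forall_fin_two.2 ⟨ha, hb⟩, by simp [Fin.forall_fin_two, hab]⟩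

section Graph

variable {u v : R.α} (e : Set.Ici u ≃o Set.Ici v)

def graph : Set (R.Derived ![u, v]) := {c | (e ⟨c.1 0, c.2.1 0⟩ : R.α) = c.1 1}

def minOffGraph : Set (R.Derived ![u, v]) :=
  {f | f ∉ graph e ∧ ∀ c, R.dle c f → c ≠ f → c ∈ graph e}

theorem mem_graph_of_dle (hpres : ∀ a, R.ht (e a : R.α) = R.ht a) {c d : R.Derived ![u, v]}
    (hcd : R.dle c d) (hd : d ∈ graph e) : c ∈ graph e := by
  have hle : (e ⟨c.1 0, c.2.1 0⟩ : R.α) ≤ d.1 1 := hd ▸ e.monotone (hcd 0)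
  exact eq_of_le_of_le_of_ht_eq_s14 hle (hcd 1) (by rw [hpres]; exact c.2.2 0 1)

theorem minOffGraph_countable (h2 : R.NFree 2) (hne : u ≠ v) (hht : R.ht u = R.ht v) :
    (minOffGraph e).Countable := by
  refine (h2 ![u, v] ?_ ?_).2 _ fun c hc d hd hcd =>
    ⟨fun h => hc.1 (hd.2 c h hcd), fun h => hd.1 (hc.2 d h hcd.symm)⟩
  · intro i j hij
    fin_cases i <;> fin_cases j <;> simp_all
  · intro i j
    fin_cases i <;> fin_cases j <;> simp [hht]

theorem pair_mem_minOffGraph (hpres : ∀ a, R.ht (e a : R.α) = R.ht a) {a₀ a' b' : R.α}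
    (ha₀ : u ≤ a₀) (ha' : a₀ ≤ a') (hb' : (e ⟨a₀, ha₀⟩ : R.α) ≤ b')
    (hta' : R.ht a' = R.ht a₀ + 1) (htb' : R.ht b' = R.ht a₀ + 1)
    (hne : (e ⟨a', ha₀.trans ha'⟩ : R.α) ≠ b') :
    Derived.pair (ha₀.trans ha') ((e ⟨a₀, ha₀⟩).2.out.trans hb') (hta'.trans htb'.symm) ∈
      minOffGraph e := by
  refine ⟨hne, fun c hcf hcne => ?_⟩
  let f₀ := Derived.pair ha₀ (e ⟨a₀, ha₀⟩).2 (hpres ⟨a₀, ha₀⟩).symm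
  have hf₀ : f₀ ∈ graph e := rfl
  exact mem_graph_of_dle e hpres (dle_of_dle_of_ht_eq_add_one (d := f₀) hcf hcne
    (Fin.forall_fin_two.2 ⟨ha', hb'⟩) 0 hta') hf₀

end Graph

theorem Normal.isEmpty_orderIso_Ici_of_ht_eq (hR : R.Normal) (h2 : R.NFree 2) {u v : R.α}
    (hne : u ≠ v) (hht : R.ht u = R.ht v) : IsEmpty (Set.Ici u ≃o Set.Ici v) := by
  refine ⟨fun e => ?_⟩
  have hpres := ht_apply_eq_of_ht_eq e hht
  obtain ⟨σ, hσ, hbound⟩ := (minOffGraph_countable e h2 hne hht).exists_lt_omega_one_forall_le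
    (f := fun f => R.ht (f.1 0)) fun f => omegaOne_eq ▸ R.ht_lt_omegaOne _
  obtain ⟨a₀, (ha₀ : u ≤ a₀), hta₀⟩ := hR.2.2.2 u (max σ (R.ht u)) (le_max_right _ _)
    (max_lt (omegaOne_eq ▸ hσ) (R.ht_lt_omegaOne u))
  obtain ⟨a', -, ⟨(ha' : a₀ ≤ a'), -⟩, -, -, hta', -⟩ := hR.2.1 a₀
  obtain ⟨b', hb', htb', hb'ne⟩ :=
    hR.exists_ht_eq_add_one_ne (e ⟨a₀, ha₀⟩) (e ⟨a', ha₀.trans ha'⟩)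
  have hle := hbound _ (pair_mem_minOffGraph e hpres ha₀ ha' hb' hta' (by rw [htb', hpres])
    hb'ne.symm)
  change R.ht a' ≤ σ at hle
  rw [hta', hta₀] at hle
  exact (Order.lt_add_one_iff.2 (le_max_left _ _)).not_ge hle

theorem Normal.isEmpty_orderIso_Ici_of_not_le (hR : R.Normal) (h2 : R.NFree 2) {p q : R.α}
    (hqp : ¬ q ≤ p) : IsEmpty (Set.Ici p ≃o Set.Ici q) := by
  refine ⟨fun e => ?_⟩
  obtain ⟨δ, hδ, hδω, hδadd⟩ := Ordinal.exists_isPrincipal_add_gt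
    (omegaOne_eq ▸ max_lt (R.ht_lt_omegaOne p) (R.ht_lt_omegaOne q))
  have habsorb := Ordinal.isPrincipal_add_iff_add_left_eq_self.1 hδadd
  obtain ⟨u, hpu, hu, hqu⟩ := hR.exists_ht_eq_not_le hqp ((le_max_left _ _).trans_lt hδ)
    (omegaOne_eq ▸ hδω)
  have hht : R.ht u = R.ht (e ⟨u, hpu⟩ : R.α) := by
    rw [ht_apply_eq_add e ⟨u, hpu⟩ δ (by rw [hu, habsorb _ ((le_max_left _ _).trans_lt hδ)]),
      habsorb _ ((le_max_right _ _).trans_lt hδ), hu]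
  have hne : u ≠ e ⟨u, hpu⟩ := fun h => hqu (h ▸ (e ⟨u, hpu⟩).2)
  exact (hR.isEmpty_orderIso_Ici_of_ht_eq h2 hne hht).false (e.restrictIci ⟨u, hpu⟩)

end Tree1

/-- a `2`-free normal tree of height `ω₁` is totally rigid: for distinct
`x, y ∈ R` the subtrees `R_x` and `R_y` are not isomorphic. -/
theorem rigidKurepa_stmt14 (R : Tree1) (hR : R.Normal) (h2 : R.NFree 2) :
    ∀ x y : R.α, x ≠ y →
      ¬ ∃ g : {z : R.α // R.le x z} → {z : R.α // R.le y z},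
        Function.Bijective g ∧ ∀ a b, R.le a.1 b.1 ↔ R.le (g a).1 (g b).1 := by
  rintro x y hxy ⟨g, hbij, hiff⟩
  let e : Set.Ici x ≃o Set.Ici y := ⟨Equiv.ofBijective g hbij, (hiff _ _).symm⟩
  by_cases hyx : y ≤ x
  · exact (hR.isEmpty_orderIso_Ici_of_not_le h2 fun hxy' => hxy (le_antisymm hxy' hyx)).false
      e.symm
  · exact (hR.isEmpty_orderIso_Ici_of_not_le h2 hyx).false e
end
end
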